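/- arXiv:2101.03086 — 15 statements merged into one kernel-verified Lean document; each statement's English description precedes it below -/
import Mathlib

section
/- Let α < 0. Define A⁺ = β⁺(α)·α/γ(α) and A⁻ = β⁻(α)·α/γ(α), and set Φ(α) = α + π⁺·[(α·μc2⁺ − μc⁺)·(A⁺)² + 2·α·μc⁺·A⁺] + π⁻·[(α·μc2⁻ − μc⁻)·(A⁻)² + 2·α·μc⁻·A⁻] + 2·α·π₁₁·μc⁺·μc⁻·A⁺·A⁻. Then α < Φ(α) < 0; that is, one backward step of the inventory-cost recursion maps any negative value strictly closer to zero while keeping it negative. -/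
/-!
Write `c± = μc± - α μc2±` (positive) and `v = (π⁺ μc⁺, π⁻ μc⁻)`. Then `Φ(α) - α` is the value of the
concave quadratic `-π⁺ c⁺ x² - π⁻ c⁻ y² + 2α π₁₁ μc⁺ μc⁻ x y + 2α ⟪v, (x, y)⟫` at its stationary
point, which is `(A⁺, A⁻)`; at a stationary point this value is `α s` with `s = ⟪v, (A⁺, A⁻)⟫`, so
`Φ(α) = α (1 + s)`. If `N` is the matrix of the negated quadratic part, then `γ = -det N` and
`s = α vᵀ N⁻¹ v`, so `s < 0` because `N` is positive definite, and `s > -1` says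
`det (N + α v vᵀ) > 0`. Expanded, the latter comes down to the covariance bound
`(π₁₁ - π⁺π⁻)² ≤ π⁺(1 - π⁺) π⁻(1 - π⁻)` for two Bernoulli variables with joint probability `π₁₁`.
-/

section InventoryStep

-- `p, q, r` stand for `π⁺, π⁻, π₁₁`, `a, b` for `μc⁺, μc⁻`, and `c, d` for `c⁺, c⁻`.
variable {p q r a b c d α : ℝ}

theorem sq_mul_sub_mul_le {x y z w : ℝ} (hx : 0 ≤ x) (hy : 0 ≤ y) (hz : 0 ≤ z) (hw : 0 ≤ w) :
    (x * w - y * z) ^ 2 ≤ (x + y) * (z + w) * ((x + z) * (y + w)) := by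
  have h₁ : x * w + y * z ≤ (x + y) * (z + w) := by
    nlinarith [mul_nonneg hx hz, mul_nonneg hy hw]
  have h₂ : x * w + y * z ≤ (x + z) * (y + w) := by
    nlinarith [mul_nonneg hx hy, mul_nonneg hz hw]
  calc (x * w - y * z) ^ 2 ≤ (x * w + y * z) ^ 2 := by
        nlinarith [mul_nonneg hx hw, mul_nonneg hy hz]
    _ = (x * w + y * z) * (x * w + y * z) := sq _
    _ ≤ (x + y) * (z + w) * ((x + z) * (y + w)) := by gcongr

-- The four cells of the joint distribution are `r, p - r, q - r, 1 - p - q + r`.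
theorem sq_sub_mul_le_of_frechet (hr : 0 ≤ r) (hpq : p + q - 1 ≤ r) (hrp : r ≤ p) (hrq : r ≤ q) :
    (r - p * q) ^ 2 ≤ p * (1 - p) * (q * (1 - q)) :=
  calc (r - p * q) ^ 2 = (r * (1 - p - q + r) - (p - r) * (q - r)) ^ 2 := by ring
    _ ≤ (r + (p - r)) * ((q - r) + (1 - p - q + r))
          * ((r + (q - r)) * ((p - r) + (1 - p - q + r))) :=
      sq_mul_sub_mul_le hr (by linarith) (by linarith) (by linarith)
    _ = p * (1 - p) * (q * (1 - q)) := by ring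

theorem hessian_det_pos (hp : 0 < p) (hq : 0 < q) (hr : 0 ≤ r) (hrp : r ≤ p) (hrq : r ≤ q)
    (ha : 0 < a) (hb : 0 < b) (hα : α ≤ 0) (hc : a - α * a ^ 2 ≤ c) (hd : b - α * b ^ 2 ≤ d) :
    (r * α * a * b) ^ 2 < p * q * (c * d) := by
  have ha' : 0 ≤ -α * a ^ 2 := by nlinarith
  have hb' : 0 ≤ -α * b ^ 2 := by nlinarith
  have hcd : (-α * a ^ 2) * (-α * b ^ 2) < c * d :=
    mul_lt_mul'' (by linarith) (by linarith) ha' hb'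
  calc (r * α * a * b) ^ 2 = r ^ 2 * ((-α * a ^ 2) * (-α * b ^ 2)) := by ring
    _ ≤ p * q * ((-α * a ^ 2) * (-α * b ^ 2)) := by
      gcongr
      calc r ^ 2 = r * r := sq r
        _ ≤ p * q := mul_le_mul hrp hrq hr hp.le
    _ < p * q * (c * d) := by gcongr

-- `p * q` times this is `vᵀ (adj N) v`.
theorem adjugate_form_pos (hp : 0 < p) (hq : 0 < q) (hrp : r ≤ p) (hrq : r ≤ q)
    (ha : 0 < a) (hb : 0 < b) (hα : α ≤ 0) (hc : a - α * a ^ 2 ≤ c) (hd : b - α * b ^ 2 ≤ d) :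
    0 < p * a ^ 2 * d + q * b ^ 2 * c + 2 * α * r * a ^ 2 * b ^ 2 := by
  have hpa : p * a ^ 2 * (b - α * b ^ 2) ≤ p * a ^ 2 * d := by gcongr
  have hqb : q * b ^ 2 * (a - α * a ^ 2) ≤ q * b ^ 2 * c := by gcongr
  have hslack : 0 ≤ -α * a ^ 2 * b ^ 2 * (p + q - 2 * r) :=
    mul_nonneg (mul_nonneg (mul_nonneg (neg_nonneg.2 hα) (sq_nonneg a)) (sq_nonneg b))
      (by linarith)
  linarith [mul_pos (mul_pos hp (pow_pos ha 2)) hb, mul_pos (mul_pos hq (pow_pos hb 2)) ha]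

-- The right-hand side minus the left-hand side is `det (N + α v vᵀ)`.
theorem det_add_mul_adjugate_form_pos (hp : 0 < p) (hq : 0 < q) (hp1 : p ≤ 1) (hq1 : q ≤ 1)
    (ha : 0 < a) (hb : 0 < b) (hα : α ≤ 0) (hc : a - α * a ^ 2 ≤ c) (hd : b - α * b ^ 2 ≤ d)
    (hcov : (r - p * q) ^ 2 ≤ p * (1 - p) * (q * (1 - q))) :
    (r * α * a * b) ^ 2 <
      p * q * (c * d + α * (p * a ^ 2 * d + q * b ^ 2 * c + 2 * α * r * a ^ 2 * b ^ 2)) := by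
  have hc' : 0 < a - α * (1 - p) * a ^ 2 := by
    nlinarith [mul_nonneg (mul_nonneg (neg_nonneg.2 hα) (sub_nonneg.2 hp1)) (sq_nonneg a)]
  have hd' : 0 < b - α * (1 - q) * b ^ 2 := by
    nlinarith [mul_nonneg (mul_nonneg (neg_nonneg.2 hα) (sub_nonneg.2 hq1)) (sq_nonneg b)]
  have hprod : α ^ 2 * a ^ 2 * b ^ 2 * ((1 - p) * (1 - q)) <
      (a - α * (1 - p) * a ^ 2) * (b - α * (1 - q) * b ^ 2) := by
    nlinarith [mul_pos ha hb, mul_nonneg (mul_nonneg (neg_nonneg.2 hα) (mul_pos ha hb).le)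
      (add_nonneg (mul_nonneg hb.le (sub_nonneg.2 hq1)) (mul_nonneg ha.le (sub_nonneg.2 hp1)))]
  have hmono : (a - α * (1 - p) * a ^ 2) * (b - α * (1 - q) * b ^ 2) ≤
      (c + α * p * a ^ 2) * (d + α * q * b ^ 2) :=
    mul_le_mul (by linarith) (by linarith) hd'.le (by linarith)
  have hkey : α ^ 2 * a ^ 2 * b ^ 2 * (r - p * q) ^ 2 <
      p * q * ((c + α * p * a ^ 2) * (d + α * q * b ^ 2)) :=
    calc α ^ 2 * a ^ 2 * b ^ 2 * (r - p * q) ^ 2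
        ≤ α ^ 2 * a ^ 2 * b ^ 2 * (p * (1 - p) * (q * (1 - q))) := by gcongr
      _ = p * q * (α ^ 2 * a ^ 2 * b ^ 2 * ((1 - p) * (1 - q))) := by ring
      _ < p * q * ((c + α * p * a ^ 2) * (d + α * q * b ^ 2)) :=
        mul_lt_mul_of_pos_left (hprod.trans_le hmono) (mul_pos hp hq)
  calc (r * α * a * b) ^ 2
      = α ^ 2 * a ^ 2 * b ^ 2 * (r - p * q) ^ 2
          + α ^ 2 * a ^ 2 * b ^ 2 * (2 * p * q * r - (p * q) ^ 2) := by ring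
    _ < p * q * ((c + α * p * a ^ 2) * (d + α * q * b ^ 2))
          + α ^ 2 * a ^ 2 * b ^ 2 * (2 * p * q * r - (p * q) ^ 2) := by gcongr
    _ = p * q * (c * d + α * (p * a ^ 2 * d + q * b ^ 2 * c + 2 * α * r * a ^ 2 * b ^ 2)) := by ring

theorem stationary_eq {x y γ : ℝ} (hγ : γ = (r * α * a * b) ^ 2 - p * q * (c * d)) (hγ0 : γ ≠ 0)
    (hx : γ * x = -(α * q * a * (p * d + r * α * b ^ 2)))
    (hy : γ * y = -(α * p * b * (q * c + r * α * a ^ 2))) :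
    p * c * x - α * r * a * b * y = α * p * a ∧ q * d * y - α * r * a * b * x = α * q * b := by
  subst hγ
  constructor <;> refine mul_left_cancel₀ hγ0 ?_
  · linear_combination p * c * hx - α * r * a * b * hy
  · linear_combination q * d * hy - α * r * a * b * hx

theorem value_eq_of_stationary {x y : ℝ} (hx : p * c * x - α * r * a * b * y = α * p * a)
    (hy : q * d * y - α * r * a * b * x = α * q * b) :
    α + p * (-c * x ^ 2 + 2 * α * a * x) + q * (-d * y ^ 2 + 2 * α * b * y)
      + 2 * α * r * a * b * x * y = α * (1 + (p * a * x + q * b * y)) := by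
  linear_combination -x * hx - y * hy

theorem stationary_sum_mem_Ioo {x y γ : ℝ} (hp : 0 < p) (hq : 0 < q) (hp1 : p ≤ 1) (hq1 : q ≤ 1)
    (hr : 0 ≤ r) (hpq : p + q - 1 ≤ r) (hrp : r ≤ p) (hrq : r ≤ q) (ha : 0 < a) (hb : 0 < b)
    (hα : α < 0) (hc : a - α * a ^ 2 ≤ c) (hd : b - α * b ^ 2 ≤ d)
    (hγ : γ = (r * α * a * b) ^ 2 - p * q * (c * d)) (hγ_neg : γ < 0)
    (hx : γ * x = -(α * q * a * (p * d + r * α * b ^ 2)))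
    (hy : γ * y = -(α * p * b * (q * c + r * α * a ^ 2))) :
    p * a * x + q * b * y ∈ Set.Ioo (-1) 0 := by
  have hS := adjugate_form_pos hp hq hrp hrq ha hb hα.le hc hd
  have hdet := det_add_mul_adjugate_form_pos hp hq hp1 hq1 ha hb hα.le hc hd
    (sq_sub_mul_le_of_frechet hr hpq hrp hrq)
  have hγs : γ * (p * a * x + q * b * y) =
      -(α * (p * q * (p * a ^ 2 * d + q * b ^ 2 * c + 2 * α * r * a ^ 2 * b ^ 2))) := by
    linear_combination p * a * hx + q * b * hy
  constructor
  · have : 0 < 1 + (p * a * x + q * b * y) :=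
      pos_of_mul_neg_right (by linear_combination hdet + hγ + hγs) hγ_neg.le
    linarith
  · refine neg_of_mul_pos_right ?_ hγ_neg.le
    rw [hγs, neg_pos]
    exact mul_neg_of_neg_of_pos hα (mul_pos (mul_pos hp hq) hS)

end InventoryStep

/-- One backward step of the inventory-cost recursion maps any negative value
strictly closer to zero while keeping it negative: `α < Φ(α) < 0`. -/
theorem stmt0
    (πp πm π11 μcp μcm μc2p μc2m α : ℝ)
    (hπp : πp ∈ Set.Ioo (0:ℝ) 1) (hπm : πm ∈ Set.Ioo (0:ℝ) 1)
    (hπ11l : max (πp + πm - 1) 0 ≤ π11) (hπ11u : π11 ≤ min πp πm)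
    (hμcp : 0 < μcp) (hμcm : 0 < μcm)
    (hμc2p : μcp ^ 2 ≤ μc2p) (hμc2m : μcm ^ 2 ≤ μc2m)
    (hα : α < 0)
    (γ βp βm Ap Am Φ : ℝ)
    (hγ : γ = (π11 * α * μcp * μcm) ^ 2
            - πp * πm * (α * μc2p - μcp) * (α * μc2m - μcm))
    (hβp : βp = πp * πm * μcp * (α * μc2m - μcm) - πm * π11 * α * μcp * μcm ^ 2)
    (hβm : βm = πp * πm * μcm * (α * μc2p - μcp) - πp * π11 * α * μcm * μcp ^ 2)
    (hAp : Ap = βp * α / γ) (hAm : Am = βm * α / γ)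
    (hΦ : Φ = α + πp * ((α * μc2p - μcp) * Ap ^ 2 + 2 * α * μcp * Ap)
            + πm * ((α * μc2m - μcm) * Am ^ 2 + 2 * α * μcm * Am)
            + 2 * α * π11 * μcp * μcm * Ap * Am) :
    α < Φ ∧ Φ < 0 := by
  obtain ⟨hp0, hp1⟩ := hπp
  obtain ⟨hm0, hm1⟩ := hπm
  obtain ⟨hrl, hr0⟩ := max_le_iff.1 hπ11l
  obtain ⟨hrp, hrm⟩ := le_min_iff.1 hπ11u
  have hcp : μcp - α * μcp ^ 2 ≤ μcp - α * μc2p := by nlinarith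
  have hcm : μcm - α * μcm ^ 2 ≤ μcm - α * μc2m := by nlinarith
  have hγ' : γ = (π11 * α * μcp * μcm) ^ 2
      - πp * πm * ((μcp - α * μc2p) * (μcm - α * μc2m)) := by rw [hγ]; ring
  have hγ_neg : γ < 0 := by
    rw [hγ', sub_neg]
    exact hessian_det_pos hp0 hm0 hr0 hrp hrm hμcp hμcm hα.le hcp hcm
  have hAp' : γ * Ap = -(α * πm * μcp * (πp * (μcm - α * μc2m) + π11 * α * μcm ^ 2)) := by
    rw [hAp, hβp]; field_simp [hγ_neg.ne]; ring
  have hAm' : γ * Am = -(α * πp * μcm * (πm * (μcp - α * μc2p) + π11 * α * μcp ^ 2)) := by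
    rw [hAm, hβm]; field_simp [hγ_neg.ne]; ring
  obtain ⟨hstat_p, hstat_m⟩ := stationary_eq hγ' hγ_neg.ne hAp' hAm'
  have hΦ' : Φ = α * (1 + (πp * μcp * Ap + πm * μcm * Am)) := by
    linear_combination hΦ + value_eq_of_stationary hstat_p hstat_m
  obtain ⟨hlow, hhigh⟩ := stationary_sum_mem_Ioo hp0 hm0 hp1.le hm1.le hr0 hrl hrp hrm hμcp hμcm hα
    hcp hcm hγ' hγ_neg hAp' hAm'
  rw [hΦ']
  constructor
  · linarith [mul_pos_of_neg_of_neg hα hhigh]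
  · exact mul_neg_of_neg_of_pos hα (by linarith)
end

section
/- Let N ≥ 0 and λ > 0. Suppose for each k ∈ {0,…,N} we are given π⁺ₖ, π⁻ₖ ∈ (0,1) and π₁₁,ₖ ∈ [max(π⁺ₖ+π⁻ₖ−1, 0), min(π⁺ₖ, π⁻ₖ)], together with fixed μc⁺, μc⁻ > 0 and μc2⁺ ≥ (μc⁺)², μc2⁻ ≥ (μc⁻)². Define the backward sequence α_{N+1} = −λ and, for k = N down to 0, α_k = α_{k+1} + π⁺ₖ·[(α_{k+1}·μc2⁺ − μc⁺)·(A⁺ₖ)² + 2·α_{k+1}·μc⁺·A⁺ₖ] + π⁻ₖ·[(α_{k+1}·μc2⁻ − μc⁻)·(A⁻ₖ)² + 2·α_{k+1}·μc⁻·A⁻ₖ] + 2·α_{k+1}·π₁₁,ₖ·μc⁺·μc⁻·A⁺ₖ·A⁻ₖ, where A±ₖ = β±ₖ(α_{k+1})·α_{k+1}/γₖ(α_{k+1}) with γₖ and β±ₖ built from (π⁺ₖ, π⁻ₖ, π₁₁,ₖ) as in the standing definitions. Then α_k < 0 for every k ∈ {0,…,N+1}, and the sequence is strictly decreasing with time: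 α_k > α_{k+1} for every k ∈ {0,…,N}. -/
set_option maxHeartbeats 1000000

private lemma aux2 (μcp μcm μc2p μc2m a : ℝ)
    (hμcp : 0 < μcp) (hμcm : 0 < μcm)
    (hμc2p : μcp ^ 2 ≤ μc2p) (hμc2m : μcm ^ 2 ≤ μc2m)
    (ha : a < 0) (hM : a * μc2m - μcm < 0) :
    a^2 * μcp^2 * μcm^2 < (a * μc2p - μcp) * (a * μc2m - μcm) := by
  have hA : a * μc2p ≤ a * μcp^2 := mul_le_mul_of_nonpos_left hμc2p ha.le
  have hB : a * μc2m ≤ a * μcm^2 := mul_le_mul_of_nonpos_left hμc2m ha.le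
  have hP' : a * μcp^2 - μcp < 0 := by nlinarith
  have s1 : (a * μc2p - μcp) * (a * μc2m - μcm)
      ≥ (a * μcp^2 - μcp) * (a * μc2m - μcm) := by nlinarith
  have s2 : (a * μcp^2 - μcp) * (a * μc2m - μcm)
      ≥ (a * μcp^2 - μcp) * (a * μcm^2 - μcm) := by nlinarith
  have s3 : (a * μcp^2 - μcp) * (a * μcm^2 - μcm) - a^2 * μcp^2 * μcm^2
      = μcp * μcm * (1 - a * μcp - a * μcm) := by ring
  have s4 : 0 < μcp * μcm * (1 - a * μcp - a * μcm) := by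
    have : 0 < 1 - a * μcp - a * μcm := by nlinarith
    positivity
  linarith

lemma step (pp pm p11 μcp μcm μc2p μc2m a g bp bm Ap Am ak : ℝ)
    (hpp : pp ∈ Set.Ioo (0:ℝ) 1) (hpm : pm ∈ Set.Ioo (0:ℝ) 1)
    (hp11l : max (pp + pm - 1) 0 ≤ p11) (hp11u : p11 ≤ min pp pm)
    (hμcp : 0 < μcp) (hμcm : 0 < μcm)
    (hμc2p : μcp ^ 2 ≤ μc2p) (hμc2m : μcm ^ 2 ≤ μc2m)
    (ha : a < 0)
    (hg : g = (p11 * a * μcp * μcm) ^ 2 - pp * pm * (a * μc2p - μcp) * (a * μc2m - μcm))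
    (hbp : bp = pp * pm * μcp * (a * μc2m - μcm) - pm * p11 * a * μcp * μcm ^ 2)
    (hbm : bm = pp * pm * μcm * (a * μc2p - μcp) - pp * p11 * a * μcm * μcp ^ 2)
    (hAp : Ap = bp * a / g) (hAm : Am = bm * a / g)
    (hrec : ak = a + pp * ((a * μc2p - μcp) * Ap ^ 2 + 2 * a * μcp * Ap)
        + pm * ((a * μc2m - μcm) * Am ^ 2 + 2 * a * μcm * Am)
        + 2 * a * p11 * μcp * μcm * Ap * Am) :
    ak < 0 ∧ a < ak := by
  obtain ⟨hpp0, hpp1⟩ := hpp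
  obtain ⟨hpm0, hpm1⟩ := hpm
  have hp11nn : 0 ≤ p11 := le_trans (le_max_right _ _) hp11l
  have hp00 : pp + pm - 1 ≤ p11 := le_trans (le_max_left _ _) hp11l
  have hp11p : p11 ≤ pp := le_trans hp11u (min_le_left _ _)
  have hp11m : p11 ≤ pm := le_trans hp11u (min_le_right _ _)
  have hP : a * μc2p - μcp < 0 := by
    have h : a * μc2p < 0 := mul_neg_of_neg_of_pos ha (lt_of_lt_of_le (by positivity) hμc2p)
    linarith only [h, hμcp]
  have hM : a * μc2m - μcm < 0 := by
    have h : a * μc2m < 0 := mul_neg_of_neg_of_pos ha (lt_of_lt_of_le (by positivity) hμc2m)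
    linarith only [h, hμcm]
  -- γ < 0
  have h1 : p11 ^ 2 ≤ pp * pm := by
    rw [sq]; exact mul_le_mul hp11p hp11m hp11nn hpp0.le
  have h2 : a^2 * μcp^2 * μcm^2 < (a * μc2p - μcp) * (a * μc2m - μcm) :=
    aux2 μcp μcm μc2p μc2m a hμcp hμcm hμc2p hμc2m ha hM
  have hgneg : g < 0 := by
    rw [hg]
    have k1 : p11 ^ 2 * (a^2 * μcp^2 * μcm^2) ≤ pp * pm * (a^2 * μcp^2 * μcm^2) :=
      mul_le_mul_of_nonneg_right h1 (by positivity)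
    have k2 : pp * pm * (a^2 * μcp^2 * μcm^2)
        < pp * pm * ((a * μc2p - μcp) * (a * μc2m - μcm)) :=
      mul_lt_mul_of_pos_left h2 (mul_pos hpp0 hpm0)
    have k3 : (p11 * a * μcp * μcm) ^ 2 = p11 ^ 2 * (a^2 * μcp^2 * μcm^2) := by ring
    have k4 : pp * pm * ((a * μc2p - μcp) * (a * μc2m - μcm))
        = pp * pm * (a * μc2p - μcp) * (a * μc2m - μcm) := by ring
    linarith only [k1, k2, k3, k4]
  have hgne : g ≠ 0 := ne_of_lt hgneg
  -- critical point equations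
  have hApg : Ap * g = bp * a := by rw [hAp]; field_simp
  have hAmg : Am * g = bm * a := by rw [hAm]; field_simp
  have key1 : pp * (a * μc2p - μcp) * (bp * a) + a * p11 * μcp * μcm * (bm * a)
      + a * pp * μcp * g = 0 := by rw [hg, hbp, hbm]; ring
  have key2 : pm * (a * μc2m - μcm) * (bm * a) + a * p11 * μcp * μcm * (bp * a)
      + a * pm * μcm * g = 0 := by rw [hg, hbp, hbm]; ring
  have E1 : pp * (a * μc2p - μcp) * Ap + a * p11 * μcp * μcm * Am + a * pp * μcp = 0 := by
    have hmul : (pp * (a * μc2p - μcp) * Ap + a * p11 * μcp * μcm * Am + a * pp * μcp) * g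
        = 0 := by
      linear_combination (pp * (a * μc2p - μcp)) * hApg + (a * p11 * μcp * μcm) * hAmg + key1
    exact (mul_eq_zero.mp hmul).resolve_right hgne
  have E2 : pm * (a * μc2m - μcm) * Am + a * p11 * μcp * μcm * Ap + a * pm * μcm = 0 := by
    have hmul : (pm * (a * μc2m - μcm) * Am + a * p11 * μcp * μcm * Ap + a * pm * μcm) * g
        = 0 := by
      linear_combination (pm * (a * μc2m - μcm)) * hAmg + (a * p11 * μcp * μcm) * hApg + key2
    exact (mul_eq_zero.mp hmul).resolve_right hgne
  -- (Ap, Am) ≠ (0,0)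
  have hne : ¬ (Ap = 0 ∧ Am = 0) := by
    rintro ⟨h0, h0'⟩
    rw [h0, h0'] at E1
    have hneg' : a * pp * μcp < 0 :=
      mul_neg_of_neg_of_pos (mul_neg_of_neg_of_pos ha hpp0) hμcp
    linarith only [E1, hneg']
  -- negativity
  have hq1 : 0 ≤ (μc2p - μcp^2) * Ap^2 :=
    mul_nonneg (by linarith only [hμc2p]) (sq_nonneg Ap)
  have hq2 : 0 ≤ (μc2m - μcm^2) * Am^2 :=
    mul_nonneg (by linarith only [hμc2m]) (sq_nonneg Am)
  have hT1 : 0 ≤ 1 + 2 * μcp * Ap + μc2p * Ap ^ 2 := by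
    linarith only [sq_nonneg (1 + μcp * Ap), hq1]
  have hT2 : 0 ≤ 1 + 2 * μcm * Am + μc2m * Am ^ 2 := by
    linarith only [sq_nonneg (1 + μcm * Am), hq2]
  have hT3 : 0 ≤ 1 + 2 * μcp * Ap + 2 * μcm * Am + μc2p * Ap ^ 2 + μc2m * Am ^ 2
      + 2 * μcp * μcm * Ap * Am := by
    linarith only [sq_nonneg (1 + μcp * Ap + μcm * Am), hq1, hq2]
  have hS : 0 ≤ 1 + 2 * pp * μcp * Ap + 2 * pm * μcm * Am + pp * μc2p * Ap ^ 2
      + pm * μc2m * Am ^ 2 + 2 * p11 * μcp * μcm * Ap * Am := by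
    have w1 := mul_nonneg (by linarith only [hp11p] : (0:ℝ) ≤ pp - p11) hT1
    have w2 := mul_nonneg (by linarith only [hp11m] : (0:ℝ) ≤ pm - p11) hT2
    have w3 := mul_nonneg hp11nn hT3
    linarith only [w1, w2, w3, hp00]
  have hposAA : 0 < pp * μcp * Ap ^ 2 + pm * μcm * Am ^ 2 := by
    have n1 : 0 ≤ pp * μcp * Ap ^ 2 := by positivity
    have n2 : 0 ≤ pm * μcm * Am ^ 2 := by positivity
    rcases eq_or_ne Ap 0 with h0 | h0
    · have h0' : Am ≠ 0 := fun h => hne ⟨h0, h⟩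
      have h3 : 0 < pm * μcm * Am ^ 2 := by positivity
      linarith only [n1, h3]
    · have h3 : 0 < pp * μcp * Ap ^ 2 := by positivity
      linarith only [n2, h3]
  have hid : ak = a * (1 + 2 * pp * μcp * Ap + 2 * pm * μcm * Am + pp * μc2p * Ap ^ 2
      + pm * μc2m * Am ^ 2 + 2 * p11 * μcp * μcm * Ap * Am)
      - (pp * μcp * Ap ^ 2 + pm * μcm * Am ^ 2) := by
    rw [hrec]; ring
  have hneg : ak < 0 := by
    have w := mul_nonpos_of_nonpos_of_nonneg ha.le hS
    linarith only [hid, w, hposAA]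
  refine ⟨hneg, ?_⟩
  -- monotonicity : ak - a = -Z with Z < 0
  have hZ : ak - a = -(pp * (a * μc2p - μcp) * Ap ^ 2 + pm * (a * μc2m - μcm) * Am ^ 2
      + 2 * a * p11 * μcp * μcm * Ap * Am) := by
    linear_combination hrec + 2 * Ap * E1 + 2 * Am * E2
  have hppP : pp * (a * μc2p - μcp) < 0 := mul_neg_of_pos_of_neg hpp0 hP
  have hZneg : pp * (a * μc2p - μcp) * Ap ^ 2 + pm * (a * μc2m - μcm) * Am ^ 2
      + 2 * a * p11 * μcp * μcm * Ap * Am < 0 := by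
    rcases eq_or_ne Am 0 with h0 | h0
    · have h0' : Ap ≠ 0 := fun h => hne ⟨h, h0⟩
      have h3 : 0 < Ap ^ 2 := by positivity
      have h4 : pp * (a * μc2p - μcp) * Ap ^ 2 < 0 :=
        mul_neg_of_neg_of_pos hppP h3
      rw [h0]
      have e : pp * (a * μc2p - μcp) * Ap ^ 2 + pm * (a * μc2m - μcm) * (0:ℝ) ^ 2
          + 2 * a * p11 * μcp * μcm * Ap * 0 = pp * (a * μc2p - μcp) * Ap ^ 2 := by ring
      linarith only [h4, e]
    · have e : (a * p11 * μcp * μcm) ^ 2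
          - pp * (a * μc2p - μcp) * (pm * (a * μc2m - μcm)) = g := by rw [hg]; ring
      have hdisc : (a * p11 * μcp * μcm) ^ 2
          < pp * (a * μc2p - μcp) * (pm * (a * μc2m - μcm)) := by
        linarith only [e, hgneg]
      by_contra hcon
      push_neg at hcon
      have hz := mul_nonpos_of_nonpos_of_nonneg hppP.le hcon
      have q1 := sq_nonneg (pp * (a * μc2p - μcp) * Ap + a * p11 * μcp * μcm * Am)
      have hAm2 : 0 < Am ^ 2 := by positivity
      have q2 : 0 < (pp * (a * μc2p - μcp) * (pm * (a * μc2m - μcm))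
          - (a * p11 * μcp * μcm) ^ 2) * Am ^ 2 :=
        mul_pos (by linarith only [hdisc]) hAm2
      linarith only [hz, q1, q2]
  linarith only [hZ, hZneg]

/-- The backward recursion for the quadratic-in-inventory coefficient of the
market maker's value function, with terminal inventory penalty `λ`, stays
negative at every time and is strictly decreasing with time. -/
theorem stmt1
    (N : ℕ) (lam : ℝ) (hlam : 0 < lam)
    (πp πm π11 : ℕ → ℝ)
    (hπp : ∀ k ≤ N, πp k ∈ Set.Ioo (0:ℝ) 1)
    (hπm : ∀ k ≤ N, πm k ∈ Set.Ioo (0:ℝ) 1)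
    (hπ11l : ∀ k ≤ N, max (πp k + πm k - 1) 0 ≤ π11 k)
    (hπ11u : ∀ k ≤ N, π11 k ≤ min (πp k) (πm k))
    (μcp μcm μc2p μc2m : ℝ)
    (hμcp : 0 < μcp) (hμcm : 0 < μcm)
    (hμc2p : μcp ^ 2 ≤ μc2p) (hμc2m : μcm ^ 2 ≤ μc2m)
    (α γ βp βm Ap Am : ℕ → ℝ)
    (hγ : ∀ k ≤ N, γ k = (π11 k * α (k+1) * μcp * μcm) ^ 2
            - πp k * πm k * (α (k+1) * μc2p - μcp) * (α (k+1) * μc2m - μcm))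
    (hβp : ∀ k ≤ N, βp k = πp k * πm k * μcp * (α (k+1) * μc2m - μcm)
            - πm k * π11 k * α (k+1) * μcp * μcm ^ 2)
    (hβm : ∀ k ≤ N, βm k = πp k * πm k * μcm * (α (k+1) * μc2p - μcp)
            - πp k * π11 k * α (k+1) * μcm * μcp ^ 2)
    (hAp : ∀ k ≤ N, Ap k = βp k * α (k+1) / γ k)
    (hAm : ∀ k ≤ N, Am k = βm k * α (k+1) / γ k)
    (hterm : α (N + 1) = -lam)
    (hrec : ∀ k ≤ N,
      α k = α (k+1)
        + πp k * ((α (k+1) * μc2p - μcp) * (Ap k) ^ 2 + 2 * α (k+1) * μcp * Ap k)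
        + πm k * ((α (k+1) * μc2m - μcm) * (Am k) ^ 2 + 2 * α (k+1) * μcm * Am k)
        + 2 * α (k+1) * π11 k * μcp * μcm * Ap k * Am k) :
    (∀ k ≤ N + 1, α k < 0) ∧ (∀ k ≤ N, α (k+1) < α k) := by
  have hstep : ∀ k ≤ N, α (k+1) < 0 → α k < 0 ∧ α (k+1) < α k := by
    intro k hk hneg
    have hrec' := hrec k hk
    have := step (πp k) (πm k) (π11 k) μcp μcm μc2p μc2m (α (k+1)) (γ k) (βp k) (βm k)
      (Ap k) (Am k) (α k) (hπp k hk) (hπm k hk) (hπ11l k hk) (hπ11u k hk)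
      hμcp hμcm hμc2p hμc2m hneg (hγ k hk) (hβp k hk) (hβm k hk)
      (hAp k hk) (hAm k hk) (by linarith [hrec'])
    exact ⟨this.1, this.2⟩
  have hneg : ∀ j ≤ N + 1, α (N + 1 - j) < 0 := by
    intro j
    induction j with
    | zero => intro _; simpa [hterm] using hlam
    | succ j ih =>
      intro hj
      have hj' : j ≤ N + 1 := Nat.le_of_succ_le hj
      have hjN : j ≤ N := Nat.lt_succ_iff.mp hj
      have h1 : N + 1 - (j + 1) = N - j := by omega
      have h2 : (N - j) + 1 = N + 1 - j := by omega
      have hprev : α ((N - j) + 1) < 0 := by rw [h2]; exact ih hj'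
      rw [h1]
      exact (hstep (N - j) (Nat.sub_le N j) hprev).1
  have hallneg : ∀ k ≤ N + 1, α k < 0 := by
    intro k hk
    have h1 : N + 1 - (N + 1 - k) = k := by omega
    have := hneg (N + 1 - k) (Nat.sub_le _ _)
    rwa [h1] at this
  refine ⟨hallneg, fun k hk => ?_⟩
  exact (hstep k hk (hallneg (k+1) (by omega))).2
end

section
/- Let α < 0. Then γ(α) ≤ π⁺·π⁻·[α·(μc2⁺·μc⁻ + μc⁺·μc2⁻) − μc⁺·μc⁻] < 0. Consequently the quadratic objective in the controls is strictly concave, so the first-order critical point of the market maker's one-period problem is its unique maximizer. -/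
/-- For `α < 0`, the denominator `γ(α)` satisfies
`γ(α) ≤ π⁺·π⁻·[α·(μc2⁺·μc⁻ + μc⁺·μc2⁻) − μc⁺·μc⁻] < 0`. -/
theorem stmt2
    (πp πm π11 μcp μcm μc2p μc2m α : ℝ)
    (hπp : πp ∈ Set.Ioo (0:ℝ) 1) (hπm : πm ∈ Set.Ioo (0:ℝ) 1)
    (hπ11l : max (πp + πm - 1) 0 ≤ π11) (hπ11u : π11 ≤ min πp πm)
    (hμcp : 0 < μcp) (hμcm : 0 < μcm)
    (hμc2p : μcp ^ 2 ≤ μc2p) (hμc2m : μcm ^ 2 ≤ μc2m)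
    (hα : α < 0)
    (γ : ℝ)
    (hγ : γ = (π11 * α * μcp * μcm) ^ 2
            - πp * πm * (α * μc2p - μcp) * (α * μc2m - μcm)) :
    γ ≤ πp * πm * (α * (μc2p * μcm + μcp * μc2m) - μcp * μcm) ∧
    πp * πm * (α * (μc2p * μcm + μcp * μc2m) - μcp * μcm) < 0 := by
  obtain ⟨hπp0, hπp1⟩ := hπp
  obtain ⟨hπm0, hπm1⟩ := hπm
  have h0 : (0:ℝ) ≤ π11 := le_trans (le_max_right _ _) hπ11l
  have hp : π11 ≤ πp := le_trans hπ11u (min_le_left _ _)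
  have hm : π11 ≤ πm := le_trans hπ11u (min_le_right _ _)
  have hμc2p0 : 0 < μc2p := lt_of_lt_of_le (pow_pos hμcp 2) hμc2p
  have hμc2m0 : 0 < μc2m := lt_of_lt_of_le (pow_pos hμcm 2) hμc2m
  constructor
  · subst hγ
    have A : π11 ^ 2 ≤ πp * πm := by nlinarith [mul_le_mul hp hm h0 (le_of_lt hπp0)]
    have B : μcp ^ 2 * μcm ^ 2 ≤ μc2p * μc2m :=
      mul_le_mul hμc2p hμc2m (sq_nonneg μcm) (le_of_lt hμc2p0)
    have key : (π11 * α * μcp * μcm) ^ 2 ≤ πp * πm * (α ^ 2 * (μc2p * μc2m)) := by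
      have h1 : π11 ^ 2 * (α ^ 2 * (μcp ^ 2 * μcm ^ 2)) ≤ πp * πm * (α ^ 2 * (μc2p * μc2m)) :=
        mul_le_mul A (mul_le_mul_of_nonneg_left B (sq_nonneg α))
          (by positivity) (by positivity)
      nlinarith [h1]
    nlinarith [key]
  · have h1 : α * (μc2p * μcm + μcp * μc2m) - μcp * μcm < 0 := by
      nlinarith [mul_pos hμc2p0 hμcm, mul_pos hμcp hμc2m0, mul_pos hμcp hμcm,
        mul_pos (mul_pos hμc2p0 hμcm) (neg_pos.mpr hα),
        mul_pos (mul_pos hμcp hμc2m0) (neg_pos.mpr hα)]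
    have := mul_pos hπp0 hπm0
    nlinarith
end

section
/- Let α < 0 and define N(α) = π⁺·π⁻·α·[(μc⁺)²·π⁺·(α·μc2⁻ − μc⁻) + (μc⁻)²·π⁻·(α·μc2⁺ − μc⁺)] − 2·π⁺·π⁻·π₁₁·α²·(μc⁺·μc⁻)². Then N(α) > 0. -/
/-- For `α < 0`, the numerator `N(α)` appearing in the ratio
`α_front/α_back = 1 + N/γ` is strictly positive. -/
theorem stmt3
    (πp πm π11 μcp μcm μc2p μc2m α : ℝ)
    (hπp : πp ∈ Set.Ioo (0:ℝ) 1) (hπm : πm ∈ Set.Ioo (0:ℝ) 1)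
    (hπ11l : max (πp + πm - 1) 0 ≤ π11) (hπ11u : π11 ≤ min πp πm)
    (hμcp : 0 < μcp) (hμcm : 0 < μcm)
    (hμc2p : μcp ^ 2 ≤ μc2p) (hμc2m : μcm ^ 2 ≤ μc2m)
    (hα : α < 0) :
    0 < πp * πm * α * (μcp ^ 2 * πp * (α * μc2m - μcm)
          + μcm ^ 2 * πm * (α * μc2p - μcp))
        - 2 * πp * πm * π11 * α ^ 2 * (μcp * μcm) ^ 2 := by
  obtain ⟨hπp0, hπp1⟩ := hπp
  obtain ⟨hπm0, hπm1⟩ := hπm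
  have h11p : π11 ≤ πp := le_trans hπ11u (min_le_left _ _)
  have h11m : π11 ≤ πm := le_trans hπ11u (min_le_right _ _)
  have hα2 : 0 < α ^ 2 := by nlinarith
  have h1 : α ^ 2 * μcm ^ 2 ≤ α ^ 2 * μc2m := by nlinarith
  have h2 : α ^ 2 * μcp ^ 2 ≤ α ^ 2 * μc2p := by nlinarith
  have hpm : 0 < πp * πm := mul_pos hπp0 hπm0
  nlinarith [mul_pos hpm (mul_pos hα2 (mul_pos (pow_pos hμcp 2) (pow_pos hμcm 2))),
    mul_le_mul_of_nonneg_left h1 (le_of_lt (mul_pos hpm hπp0)),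
    mul_le_mul_of_nonneg_left h2 (le_of_lt (mul_pos hpm hπm0)),
    mul_pos (mul_pos hpm hπp0) (mul_pos (mul_pos (pow_pos hμcp 2) hμcm) (neg_pos.mpr hα)),
    mul_pos (mul_pos hpm hπm0) (mul_pos (mul_pos (pow_pos hμcm 2) hμcp) (neg_pos.mpr hα)),
    mul_le_mul_of_nonneg_left (add_le_add h11p h11m)
      (le_of_lt (mul_pos hpm (mul_pos hα2 (mul_pos (pow_pos hμcp 2) (pow_pos hμcm 2)))))]
end

section
/- Let α < 0. With γ(α) = (π₁₁·α·μc⁺·μc⁻)² − π⁺·π⁻·(α·μc2⁺ − μc⁺)·(α·μc2⁻ − μc⁻) and N(α) = π⁺·π⁻·α·[(μc⁺)²·π⁺·(α·μc2⁻ − μc⁻) + (μc⁻)²·π⁻·(α·μc2⁺ − μc⁺)] − 2·π⁺·π⁻·π₁₁·α²·(μc⁺·μc⁻)², one has γ(α) + N(α) < 0. -/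
/-- For `α < 0`, one has `γ(α) + N(α) < 0`, the key step yielding
`0 < 1 + N(α)/γ(α) < 1`. -/
theorem stmt4
    (πp πm π11 μcp μcm μc2p μc2m α : ℝ)
    (hπp : πp ∈ Set.Ioo (0:ℝ) 1) (hπm : πm ∈ Set.Ioo (0:ℝ) 1)
    (hπ11l : max (πp + πm - 1) 0 ≤ π11) (hπ11u : π11 ≤ min πp πm)
    (hμcp : 0 < μcp) (hμcm : 0 < μcm)
    (hμc2p : μcp ^ 2 ≤ μc2p) (hμc2m : μcm ^ 2 ≤ μc2m)
    (hα : α < 0)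
    (γ Nα : ℝ)
    (hγ : γ = (π11 * α * μcp * μcm) ^ 2
            - πp * πm * (α * μc2p - μcp) * (α * μc2m - μcm))
    (hN : Nα = πp * πm * α * (μcp ^ 2 * πp * (α * μc2m - μcm)
              + μcm ^ 2 * πm * (α * μc2p - μcp))
            - 2 * πp * πm * π11 * α ^ 2 * (μcp * μcm) ^ 2) :
    γ + Nα < 0 := by
  obtain ⟨ha0, ha1⟩ := hπp
  obtain ⟨hb0, hb1⟩ := hπm
  have hg0 : (0:ℝ) ≤ π11 := le_trans (le_max_right _ _) hπ11l
  have hgs : πp + πm - 1 ≤ π11 := le_trans (le_max_left _ _) hπ11l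
  have hga : π11 ≤ πp := hπ11u.trans (min_le_left _ _)
  have hgb : π11 ≤ πm := hπ11u.trans (min_le_right _ _)
  have key : (π11 - πp * πm) ^ 2 ≤ πp * πm * (1 - πp) * (1 - πm) := by
    rcases le_total (πp * πm) π11 with h | h
    · have h1 : π11 - πp * πm ≤ πp * (1 - πm) := by nlinarith [mul_le_mul_of_nonneg_left hb1.le ha0.le]
      have h2 : π11 - πp * πm ≤ πm * (1 - πp) := by nlinarith [mul_le_mul_of_nonneg_left ha1.le hb0.le]
      have h3 := mul_le_mul h1 h2 (by linarith) (mul_nonneg ha0.le (by linarith))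
      nlinarith [h3]
    · have h1 : πp * πm - π11 ≤ πp * πm := by linarith
      have h2 : πp * πm - π11 ≤ (1 - πp) * (1 - πm) := by nlinarith
      have h3 := mul_le_mul h1 h2 (by linarith) (mul_nonneg ha0.le hb0.le)
      nlinarith [h3]
  have hx : 0 ≤ μc2p - μcp ^ 2 := by linarith
  have hy : 0 ≤ μc2m - μcm ^ 2 := by linarith
  have hβ : 0 < -α := by linarith
  -- coefficient of β²
  have hC2 : π11 ^ 2 * μcp ^ 2 * μcm ^ 2 - 2 * πp * πm * π11 * μcp ^ 2 * μcm ^ 2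
      - πp * πm * μc2p * μc2m + πp ^ 2 * πm * μcp ^ 2 * μc2m
      + πp * πm ^ 2 * μcm ^ 2 * μc2p ≤ 0 := by
    have hid2 : π11 ^ 2 * μcp ^ 2 * μcm ^ 2 - 2 * πp * πm * π11 * μcp ^ 2 * μcm ^ 2
        - πp * πm * μc2p * μc2m + πp ^ 2 * πm * μcp ^ 2 * μc2m
        + πp * πm ^ 2 * μcm ^ 2 * μc2p
      = -(μcp ^ 2 * μcm ^ 2 * (πp * πm * (1 - πp) * (1 - πm) - (π11 - πp * πm) ^ 2))
        - πp * πm * ((1 - πm) * μcm ^ 2 * (μc2p - μcp ^ 2)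
          + (1 - πp) * μcp ^ 2 * (μc2m - μcm ^ 2)
          + (μc2p - μcp ^ 2) * (μc2m - μcm ^ 2)) := by ring
    rw [hid2]
    have t1 : 0 ≤ μcp ^ 2 * μcm ^ 2 * (πp * πm * (1 - πp) * (1 - πm) - (π11 - πp * πm) ^ 2) :=
      mul_nonneg (mul_nonneg (sq_nonneg _) (sq_nonneg _)) (by linarith)
    have t2 : 0 ≤ πp * πm * ((1 - πm) * μcm ^ 2 * (μc2p - μcp ^ 2)
        + (1 - πp) * μcp ^ 2 * (μc2m - μcm ^ 2)
        + (μc2p - μcp ^ 2) * (μc2m - μcm ^ 2)) := by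
      have n1 : 0 ≤ (1 - πm) * μcm ^ 2 * (μc2p - μcp ^ 2) :=
        mul_nonneg (mul_nonneg (by linarith) (sq_nonneg _)) hx
      have n2 : 0 ≤ (1 - πp) * μcp ^ 2 * (μc2m - μcm ^ 2) :=
        mul_nonneg (mul_nonneg (by linarith) (sq_nonneg _)) hy
      have n3 : 0 ≤ (μc2p - μcp ^ 2) * (μc2m - μcm ^ 2) := mul_nonneg hx hy
      exact mul_nonneg (mul_nonneg ha0.le hb0.le) (by linarith)
    linarith
  -- coefficient of β (is ≤ 0, in fact < 0)
  have hC1 : -(πp * πm) * (μcm * (μc2p - πp * μcp ^ 2)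
      + μcp * (μc2m - πm * μcm ^ 2)) < 0 := by
    have h1 : 0 < μc2p - πp * μcp ^ 2 := by
      have := mul_lt_mul_of_pos_right ha1 (pow_pos hμcp 2)
      linarith
    have h2 : 0 < μc2m - πm * μcm ^ 2 := by
      have := mul_lt_mul_of_pos_right hb1 (pow_pos hμcm 2)
      linarith
    have : 0 < μcm * (μc2p - πp * μcp ^ 2) + μcp * (μc2m - πm * μcm ^ 2) := by
      positivity
    linarith [mul_pos (mul_pos ha0 hb0) this]
  -- constant coefficient
  have hC0 : -(πp * πm) * (μcp * μcm) < 0 := by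
    have : 0 < πp * πm * (μcp * μcm) := by positivity
    linarith
  have hid : γ + Nα =
      (π11 ^ 2 * μcp ^ 2 * μcm ^ 2 - 2 * πp * πm * π11 * μcp ^ 2 * μcm ^ 2
        - πp * πm * μc2p * μc2m + πp ^ 2 * πm * μcp ^ 2 * μc2m
        + πp * πm ^ 2 * μcm ^ 2 * μc2p) * α ^ 2
      + (-(πp * πm) * (μcm * (μc2p - πp * μcp ^ 2)
          + μcp * (μc2m - πm * μcm ^ 2))) * (-α)
      + -(πp * πm) * (μcp * μcm) := by
    subst hγ hN; ring
  rw [hid]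
  have t2 : (π11 ^ 2 * μcp ^ 2 * μcm ^ 2 - 2 * πp * πm * π11 * μcp ^ 2 * μcm ^ 2
      - πp * πm * μc2p * μc2m + πp ^ 2 * πm * μcp ^ 2 * μc2m
      + πp * πm ^ 2 * μcm ^ 2 * μc2p) * α ^ 2 ≤ 0 :=
    mul_nonpos_of_nonpos_of_nonneg hC2 (sq_nonneg α)
  have t1 : (-(πp * πm) * (μcm * (μc2p - πp * μcp ^ 2)
      + μcp * (μc2m - πm * μcm ^ 2))) * (-α) < 0 :=
    mul_neg_of_neg_of_pos hC1 hβ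
  linarith
end

section
/- Let π⁺, π⁻ ∈ (0,1] and define m(x) = (π⁺)²·π⁻ − 2·π⁺·π⁻·x + π⁺·(π⁻)² + x² − π⁺·π⁻. Then for every x with max(π⁺+π⁻−1, 0) ≤ x ≤ min(π⁺, π⁻), one has m(x) ≤ 0. -/
/-- For marginal probabilities `π⁺, π⁻ ∈ (0,1]` and any joint probability `x`
within the Fréchet bounds, `m(x) ≤ 0`. -/
theorem stmt5
    (πp πm : ℝ) (hπp : πp ∈ Set.Ioc (0:ℝ) 1) (hπm : πm ∈ Set.Ioc (0:ℝ) 1)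
    (x : ℝ) (hxl : max (πp + πm - 1) 0 ≤ x) (hxu : x ≤ min πp πm) :
    πp ^ 2 * πm - 2 * πp * πm * x + πp * πm ^ 2 + x ^ 2 - πp * πm ≤ 0 := by
  obtain ⟨hp0, hp1⟩ := hπp
  obtain ⟨hm0, hm1⟩ := hπm
  have h1 : πp + πm - 1 ≤ x := le_trans (le_max_left _ _) hxl
  have h2 : (0:ℝ) ≤ x := le_trans (le_max_right _ _) hxl
  have h3 : x ≤ πp := le_trans hxu (min_le_left _ _)
  have h4 : x ≤ πm := le_trans hxu (min_le_right _ _)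
  nlinarith [mul_nonneg (sub_nonneg.2 h3) (sub_nonneg.2 h4),
    mul_nonneg h2 (sub_nonneg.2 h3), mul_nonneg h2 (sub_nonneg.2 h4),
    mul_nonneg (sub_nonneg.2 h1) h2,
    mul_nonneg (mul_nonneg (sub_nonneg.2 hp1) (sub_nonneg.2 hm1)) h2,
    mul_nonneg (sub_nonneg.2 h3) (sub_nonneg.2 hp1),
    mul_nonneg (sub_nonneg.2 h4) (sub_nonneg.2 hm1),
    mul_nonneg (sub_nonneg.2 h1) (sub_nonneg.2 h3),
    mul_nonneg (sub_nonneg.2 h1) (sub_nonneg.2 h4)]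
end

section
/- Let α < 0 and define ℓ(u, v) = (π⁺)²·π⁻·α·u·(α·v − 1) − 2·π⁺·π⁻·π₁₁·α²·u·v + π⁺·(π⁻)²·α·v·(α·u − 1) + π₁₁²·α²·u·v − π⁺·π⁻·(α·u − 1)·(α·v − 1). Then ℓ(u, v) < 0 for all u ≥ 0 and v ≥ 0. -/
lemma Cle (πp πm π11 : ℝ) (h1 : 0 < πp) (h2 : πp < 1) (h3 : 0 < πm) (h4 : πm < 1)
    (h5 : πp + πm - 1 ≤ π11) (h6 : 0 ≤ π11) (h7 : π11 ≤ πp) (h8 : π11 ≤ πm) :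
    π11 ^ 2 - 2 * πp * πm * π11 + πp * πm * (πp + πm - 1) ≤ 0 := by
  nlinarith [mul_nonneg (sub_nonneg.2 h7) (sub_nonneg.2 h8),
    mul_nonneg h6 (by linarith : (0:ℝ) ≤ π11 - (πp + πm - 1)),
    mul_nonneg (sub_nonneg.2 h7) (by linarith : (0:ℝ) ≤ π11 - (πp + πm - 1)),
    mul_nonneg (sub_nonneg.2 h8) (by linarith : (0:ℝ) ≤ π11 - (πp + πm - 1)),
    mul_nonneg h6 (sub_nonneg.2 h7), mul_nonneg h6 (sub_nonneg.2 h8),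
    mul_pos h1 h3, mul_pos (sub_pos.2 h2) (sub_pos.2 h4)]

/-- For `α < 0`, the auxiliary function `ℓ(u, v)` arising in the contraction
proof of the inventory-cost recursion is strictly negative for all
nonnegative `u, v`. -/
theorem stmt6
    (πp πm π11 α : ℝ)
    (hπp : πp ∈ Set.Ioo (0:ℝ) 1) (hπm : πm ∈ Set.Ioo (0:ℝ) 1)
    (hπ11l : max (πp + πm - 1) 0 ≤ π11) (hπ11u : π11 ≤ min πp πm)
    (hα : α < 0) :
    ∀ u v : ℝ, 0 ≤ u → 0 ≤ v →
      πp ^ 2 * πm * α * u * (α * v - 1)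
        - 2 * πp * πm * π11 * α ^ 2 * u * v
        + πp * πm ^ 2 * α * v * (α * u - 1)
        + π11 ^ 2 * α ^ 2 * u * v
        - πp * πm * (α * u - 1) * (α * v - 1) < 0 := by
  obtain ⟨hp1, hp2⟩ := hπp
  obtain ⟨hm1, hm2⟩ := hπm
  have h5 : πp + πm - 1 ≤ π11 := le_trans (le_max_left _ _) hπ11l
  have h6 : 0 ≤ π11 := le_trans (le_max_right _ _) hπ11l
  have h7 : π11 ≤ πp := le_trans hπ11u (min_le_left _ _)
  have h8 : π11 ≤ πm := le_trans hπ11u (min_le_right _ _)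
  have hC := Cle πp πm π11 hp1 hp2 hm1 hm2 h5 h6 h7 h8
  intro u v hu hv
  have ha : α * u ≤ 0 := mul_nonpos_of_nonpos_of_nonneg hα.le hu
  have hb : α * v ≤ 0 := mul_nonpos_of_nonpos_of_nonneg hα.le hv
  have hab : 0 ≤ (α * u) * (α * v) := by nlinarith [mul_nonneg (neg_nonneg.2 ha) (neg_nonneg.2 hb)]
  nlinarith [mul_nonpos_of_nonpos_of_nonneg hC hab,
    mul_pos hp1 hm1,
    mul_nonneg (mul_nonneg (mul_pos hp1 hm1).le (sub_pos.2 hp2).le) (neg_nonneg.2 ha),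
    mul_nonneg (mul_nonneg (mul_pos hp1 hm1).le (sub_pos.2 hm2).le) (neg_nonneg.2 hb)]
end

section
/- Let α < 0. Then β⁺(α) ≤ π⁺·π⁻·(α·μc⁺·[μc2⁻ − (μc⁻)²] − μc⁺·μc⁻) < 0, and symmetrically β⁻(α) ≤ π⁺·π⁻·(α·μc⁻·[μc2⁺ − (μc⁺)²] − μc⁻·μc⁺) < 0. -/
/-- For `α < 0`, the coefficients `β⁺(α)` and `β⁻(α)` are bounded above by
strictly negative quantities. -/
theorem stmt7
    (πp πm π11 μcp μcm μc2p μc2m α : ℝ)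
    (hπp : πp ∈ Set.Ioo (0:ℝ) 1) (hπm : πm ∈ Set.Ioo (0:ℝ) 1)
    (hπ11l : max (πp + πm - 1) 0 ≤ π11) (hπ11u : π11 ≤ min πp πm)
    (hμcp : 0 < μcp) (hμcm : 0 < μcm)
    (hμc2p : μcp ^ 2 ≤ μc2p) (hμc2m : μcm ^ 2 ≤ μc2m)
    (hα : α < 0)
    (βp βm : ℝ)
    (hβp : βp = πp * πm * μcp * (α * μc2m - μcm) - πm * π11 * α * μcp * μcm ^ 2)
    (hβm : βm = πp * πm * μcm * (α * μc2p - μcp) - πp * π11 * α * μcm * μcp ^ 2) :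
    (βp ≤ πp * πm * (α * μcp * (μc2m - μcm ^ 2) - μcp * μcm) ∧
      πp * πm * (α * μcp * (μc2m - μcm ^ 2) - μcp * μcm) < 0) ∧
    (βm ≤ πp * πm * (α * μcm * (μc2p - μcp ^ 2) - μcm * μcp) ∧
      πp * πm * (α * μcm * (μc2p - μcp ^ 2) - μcm * μcp) < 0) := by
  obtain ⟨hπp0, hπp1⟩ := hπp
  obtain ⟨hπm0, hπm1⟩ := hπm
  have h11p : π11 ≤ πp := le_trans hπ11u (min_le_left _ _)
  have h11m : π11 ≤ πm := le_trans hπ11u (min_le_right _ _)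
  refine ⟨⟨?_, ?_⟩, ⟨?_, ?_⟩⟩
  · subst hβp
    nlinarith [mul_nonneg (mul_nonneg hπm0.le (sub_nonneg.mpr h11p)) (mul_pos hμcp (pow_pos hμcm 2)).le]
  · nlinarith [mul_pos hπp0 hπm0, mul_pos hμcp hμcm, mul_nonpos_of_nonpos_of_nonneg hα.le (sub_nonneg.mpr hμc2m), mul_pos (mul_pos hπp0 hπm0) (mul_pos hμcp hμcm)]
  · subst hβm
    nlinarith [mul_nonneg (mul_nonneg hπp0.le (sub_nonneg.mpr h11m)) (mul_pos hμcm (pow_pos hμcp 2)).le]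
  · nlinarith [mul_pos hπp0 hπm0, mul_pos hμcp hμcm, mul_nonpos_of_nonpos_of_nonneg hα.le (sub_nonneg.mpr hμc2p), mul_pos (mul_pos hπp0 hπm0) (mul_pos hμcm hμcp)]
end

section
/- Let α < 0. Then the inventory coefficients of the optimal placements, A⁺ = β⁺(α)·α/γ(α) and A⁻ = β⁻(α)·α/γ(α), satisfy A⁺ < 0 and A⁻ < 0. Hence the optimal ask price S + A⁺·I + C⁺ and the optimal bid price S + A⁻·I + C⁻ (for any real S, C⁺, C⁻) are strictly decreasing functions of the inventory level I. -/
/-- For `α < 0`, the inventory coefficients of the optimal placements are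
strictly negative, hence the optimal ask and bid prices are strictly
decreasing functions of the inventory level. -/
theorem stmt8
    (πp πm π11 μcp μcm μc2p μc2m α : ℝ)
    (hπp : πp ∈ Set.Ioo (0:ℝ) 1) (hπm : πm ∈ Set.Ioo (0:ℝ) 1)
    (hπ11l : max (πp + πm - 1) 0 ≤ π11) (hπ11u : π11 ≤ min πp πm)
    (hμcp : 0 < μcp) (hμcm : 0 < μcm)
    (hμc2p : μcp ^ 2 ≤ μc2p) (hμc2m : μcm ^ 2 ≤ μc2m)
    (hα : α < 0)
    (γ βp βm Ap Am : ℝ)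
    (hγ : γ = (π11 * α * μcp * μcm) ^ 2
            - πp * πm * (α * μc2p - μcp) * (α * μc2m - μcm))
    (hβp : βp = πp * πm * μcp * (α * μc2m - μcm) - πm * π11 * α * μcp * μcm ^ 2)
    (hβm : βm = πp * πm * μcm * (α * μc2p - μcp) - πp * π11 * α * μcm * μcp ^ 2)
    (hAp : Ap = βp * α / γ) (hAm : Am = βm * α / γ) :
    Ap < 0 ∧ Am < 0 ∧
    (∀ S Cp Cm : ℝ,
      StrictAnti (fun I : ℝ => S + Ap * I + Cp) ∧
      StrictAnti (fun I : ℝ => S + Am * I + Cm)) := by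
  obtain ⟨hπp0, hπp1⟩ := hπp
  obtain ⟨hπm0, hπm1⟩ := hπm
  have h110 : 0 ≤ π11 := le_trans (le_max_right _ _) hπ11l
  have h11p : π11 ≤ πp := le_trans hπ11u (min_le_left _ _)
  have h11m : π11 ≤ πm := le_trans hπ11u (min_le_right _ _)
  -- key sign facts
  have hxp : α * μc2p - μcp ≤ α * μcp ^ 2 - μcp := by nlinarith
  have hxm : α * μc2m - μcm ≤ α * μcm ^ 2 - μcm := by nlinarith
  have hβpneg : βp < 0 := by
    have inner : πp * (α * μc2m - μcm) - π11 * α * μcm ^ 2 < 0 := by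
      nlinarith [mul_nonneg (mul_nonneg (sub_nonneg.mpr h11p) (neg_nonneg.mpr hα.le)) (sq_nonneg μcm),
        mul_le_mul_of_nonneg_left hxm hπp0.le, mul_pos hπp0 hμcm]
    have h := mul_neg_of_pos_of_neg (mul_pos hπm0 hμcp) inner
    have heq : βp = πm * μcp * (πp * (α * μc2m - μcm) - π11 * α * μcm ^ 2) := by
      rw [hβp]; ring
    linarith [heq ▸ h]
  have hβmneg : βm < 0 := by
    have inner : πm * (α * μc2p - μcp) - π11 * α * μcp ^ 2 < 0 := by
      nlinarith [mul_nonneg (mul_nonneg (sub_nonneg.mpr h11m) (neg_nonneg.mpr hα.le)) (sq_nonneg μcp),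
        mul_le_mul_of_nonneg_left hxp hπm0.le, mul_pos hπm0 hμcp]
    have h := mul_neg_of_pos_of_neg (mul_pos hπp0 hμcm) inner
    have heq : βm = πp * μcm * (πm * (α * μc2p - μcp) - π11 * α * μcp ^ 2) := by
      rw [hβm]; ring
    linarith [heq ▸ h]
  have hγneg : γ < 0 := by
    have hP : 0 < -(α * μcp ^ 2) := by
      have h := mul_pos (neg_pos.mpr hα) (pow_pos hμcp 2); rw [neg_mul] at h; exact h
    have hQ : 0 < -(α * μcm ^ 2) := by
      have h := mul_pos (neg_pos.mpr hα) (pow_pos hμcm 2); rw [neg_mul] at h; exact h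
    have hX : -(α * μcp ^ 2) < -(α * μc2p - μcp) := by linarith
    have hY : -(α * μcm ^ 2) < -(α * μc2m - μcm) := by linarith
    have hprod : (-(α * μcp ^ 2)) * (-(α * μcm ^ 2))
        < (-(α * μc2p - μcp)) * (-(α * μc2m - μcm)) :=
      mul_lt_mul hX hY.le hQ (le_of_lt (hP.trans hX))
    have hππ : π11 ^ 2 ≤ πp * πm := by
      rw [pow_two]; exact mul_le_mul h11p h11m h110 hπp0.le
    have h1 := mul_le_mul_of_nonneg_right hππ (mul_nonneg hP.le hQ.le)
    have h2 := mul_lt_mul_of_pos_left hprod (mul_pos hπp0 hπm0)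
    have e1 : (π11 * α * μcp * μcm) ^ 2
        = π11 ^ 2 * ((-(α * μcp ^ 2)) * (-(α * μcm ^ 2))) := by ring
    have e2 : πp * πm * (α * μc2p - μcp) * (α * μc2m - μcm)
        = πp * πm * ((-(α * μc2p - μcp)) * (-(α * μc2m - μcm))) := by ring
    rw [hγ, e1, e2]
    linarith
  have hApneg : Ap < 0 := by
    rw [hAp]
    exact div_neg_of_pos_of_neg (mul_pos_of_neg_of_neg hβpneg hα) hγneg
  have hAmneg : Am < 0 := by
    rw [hAm]
    exact div_neg_of_pos_of_neg (mul_pos_of_neg_of_neg hβmneg hα) hγneg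
  refine ⟨hApneg, hAmneg, fun S Cp Cm => ⟨?_, ?_⟩⟩ <;>
  · intro a b hab
    dsimp only
    linarith [mul_lt_mul_of_neg_left hab hApneg, mul_lt_mul_of_neg_left hab hAmneg]
end

section
/- Assume the symmetric-market conditions: μc := μc⁺ = μc⁻ > 0, μc2 := μc2⁺ = μc2⁻ ≥ μc², π := π⁺ = π⁻ ∈ (0,1), π₁₁ ∈ [max(2π−1, 0), π], and the factorization conditions μcp± = μc·μp± and μc2p± = μc2·μp± with μp⁺ > 0, μp⁻ > 0. Let α < 0 and define γ = (π₁₁·α·μc²)² − π²·(α·μc2 − μc)², and for each sign s ∈ {+,−} with opposite sign s', A₃ˢ = (π/(2γ))·(α·μc2 − μc)·[π·(μc·μpˢ − 2·α·μc2·μpˢ) + 2·α·π₁₁·μc²·μpˢ'] + π₁₁·(α/(2γ))·μc²·[π·(μc·μpˢ' − 2·α·μc2·μpˢ') + 2·α·π₁₁·μc²·μpˢ]. Then A₃⁺ + A₃⁻ > 0; that is, the optimal placement strategy yields a strictly positive bid-ask spread. -/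
/-- In the symmetric market with factorized cross-moments, the optimal
placement strategy yields a strictly positive bid-ask spread:
`A₃⁺ + A₃⁻ > 0`. -/
theorem stmt10
    (μc μc2 π π11 μpp μpm α : ℝ)
    (hμc : 0 < μc) (hμc2 : μc ^ 2 ≤ μc2)
    (hπ : π ∈ Set.Ioo (0:ℝ) 1)
    (hπ11l : max (2 * π - 1) 0 ≤ π11) (hπ11u : π11 ≤ π)
    (hμpp : 0 < μpp) (hμpm : 0 < μpm)
    (hα : α < 0)
    (γ A3p A3m : ℝ)
    (hγ : γ = (π11 * α * μc ^ 2) ^ 2 - π ^ 2 * (α * μc2 - μc) ^ 2)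
    (hA3p : A3p = (π / (2 * γ)) * (α * μc2 - μc)
              * (π * (μc * μpp - 2 * α * μc2 * μpp) + 2 * α * π11 * μc ^ 2 * μpm)
            + π11 * (α / (2 * γ)) * μc ^ 2
              * (π * (μc * μpm - 2 * α * μc2 * μpm) + 2 * α * π11 * μc ^ 2 * μpp))
    (hA3m : A3m = (π / (2 * γ)) * (α * μc2 - μc)
              * (π * (μc * μpm - 2 * α * μc2 * μpm) + 2 * α * π11 * μc ^ 2 * μpp)
            + π11 * (α / (2 * γ)) * μc ^ 2
              * (π * (μc * μpp - 2 * α * μc2 * μpp) + 2 * α * π11 * μc ^ 2 * μpm)) :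
    0 < A3p + A3m := by
  obtain ⟨hπ0, hπ1⟩ := hπ
  have hπ11 : 0 ≤ π11 := le_trans (le_max_right _ _) hπ11l
  have hμc2pos : 0 < μc2 := lt_of_lt_of_le (pow_pos hμc 2) hμc2
  -- key nonneg quantity: π*μc2 - π11*μc^2 ≥ 0
  have hkey : 0 ≤ π * μc2 - π11 * μc ^ 2 := by nlinarith [pow_pos hμc 2]
  have hS : π11 * α * μc ^ 2 + π * (α * μc2 - μc) < 0 := by
    nlinarith [mul_nonneg hπ11 (pow_pos hμc 2).le, mul_neg_of_neg_of_pos hα hμc2pos,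
      mul_pos hπ0 hμc]
  have hD : 0 < π * μc - α * (π * μc2 - π11 * μc ^ 2) := by
    nlinarith [mul_pos hπ0 hμc]
  have hγlt : γ < 0 := by
    have : γ = (π11 * α * μc ^ 2 + π * (α * μc2 - μc)) *
        (π * μc - α * (π * μc2 - π11 * μc ^ 2)) := by rw [hγ]; ring
    rw [this]
    exact mul_neg_of_neg_of_pos hS hD
  have hγne : γ ≠ 0 := ne_of_lt hγlt
  have hE : 0 < π * μc - 2 * α * (π * μc2 - π11 * μc ^ 2) := by
    nlinarith [mul_pos hπ0 hμc]
  have hsum : A3p + A3m = (μpp + μpm) *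
      (π * μc - 2 * α * (π * μc2 - π11 * μc ^ 2)) *
      (π11 * α * μc ^ 2 + π * (α * μc2 - μc)) / (2 * γ) := by
    rw [hA3p, hA3m]
    field_simp
    ring
  rw [hsum]
  have hγfac : γ = (π11 * α * μc ^ 2 + π * (α * μc2 - μc)) *
      (π * μc - α * (π * μc2 - π11 * μc ^ 2)) := by rw [hγ]; ring
  rw [hγfac]
  rw [div_pos_iff]
  right
  constructor
  · exact mul_neg_of_pos_of_neg (mul_pos (add_pos hμpp hμpm) hE) hS
  · have := mul_neg_of_neg_of_pos hS hD
    linarith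
end

section
/- Assume μc := μc⁺ = μc⁻ > 0, π⁺, π⁻ ∈ (0,1), π₁₁ ∈ [max(π⁺+π⁻−1, 0), min(π⁺, π⁻)], and let α < 0. Define r(x, y) = π⁺·π⁻·(α·y − μc)·(μc − 2·α·x) + 2·(α·π₁₁·μc²)² − π⁺·π₁₁·α·μc³. Then r(x, y) < 0 for all x ≥ μc² and y ≥ μc². -/
/-- The coefficient `r(x, y)` of `μp⁺` in the numerator of the spread
components is strictly negative for all second moments `x, y ≥ μc²`. -/
theorem stmt11
    (μc πp πm π11 α : ℝ)
    (hμc : 0 < μc)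
    (hπp : πp ∈ Set.Ioo (0:ℝ) 1) (hπm : πm ∈ Set.Ioo (0:ℝ) 1)
    (hπ11l : max (πp + πm - 1) 0 ≤ π11) (hπ11u : π11 ≤ min πp πm)
    (hα : α < 0) :
    ∀ x y : ℝ, μc ^ 2 ≤ x → μc ^ 2 ≤ y →
      πp * πm * (α * y - μc) * (μc - 2 * α * x)
        + 2 * (α * π11 * μc ^ 2) ^ 2
        - πp * π11 * α * μc ^ 3 < 0 := by
  intro x y hx hy
  obtain ⟨hπp0, hπp1⟩ := hπp
  obtain ⟨hπm0, hπm1⟩ := hπm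
  have h11p : π11 ≤ πp := hπ11u.trans (min_le_left _ _)
  have h11m : π11 ≤ πm := hπ11u.trans (min_le_right _ _)
  have h110 : 0 ≤ π11 := (le_max_right _ 0).trans hπ11l
  -- Step 1: monotone bound at x = y = μc^2
  have key : πp * πm * (α * y - μc) * (μc - 2 * α * x)
      ≤ πp * πm * (α * μc ^ 2 - μc) * (μc - 2 * α * μc ^ 2) := by
    have h1 : α * y - μc ≤ α * μc ^ 2 - μc := by nlinarith
    have h2 : α * μc ^ 2 - μc < 0 := by nlinarith
    have h3 : 0 < μc - 2 * α * μc ^ 2 := by nlinarith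
    have h4 : μc - 2 * α * μc ^ 2 ≤ μc - 2 * α * x := by nlinarith
    have ha : α * y - μc < 0 := h1.trans_lt h2
    have hpm : 0 < πp * πm := mul_pos hπp0 hπm0
    nlinarith [mul_nonneg hpm.le (mul_nonneg h3.le (sub_nonneg.2 h1)),
      mul_nonneg hpm.le (mul_nonneg (neg_nonneg.2 ha.le) (sub_nonneg.2 h4))]
  have hfin : πp * πm * (α * μc ^ 2 - μc) * (μc - 2 * α * μc ^ 2)
      + 2 * (α * π11 * μc ^ 2) ^ 2 - πp * π11 * α * μc ^ 3 < 0 := by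
    have h5 : π11 * π11 ≤ πp * πm := mul_le_mul h11p h11m h110 hπp0.le
    nlinarith [mul_nonneg (sub_nonneg.2 h5) (mul_nonneg (sq_nonneg α) (pow_pos hμc 4).le),
      mul_pos (mul_pos hπp0 (show (0:ℝ) < 3 * πm - π11 by linarith))
        (mul_pos (neg_pos.2 hα) (pow_pos hμc 3)),
      mul_pos (mul_pos hπp0 hπm0) (pow_pos hμc 2)]
  linarith
end

section
/- Let μc > 0, μc2 ≥ μc², π ∈ (0,1], 0 ≤ π₁₁ ≤ π, μP > 0, and define f(α) = [π·(μc − 2·α·μc2) + 2·α·π₁₁·μc²]·μP / (2·[π₁₁·α·μc² − π·(α·μc2 − μc)]). Then f is nonincreasing in α on (−∞, 0): for α₁ ≤ α₂ < 0, f(α₁) ≥ f(α₂). In particular, since the inventory-cost coefficient strictly decreases backward in time, the optimal bid-ask spread is nondecreasing with time over the trading horizon. Moreover, if π₁₁·μc² = π·μc2 then f(α₁) = f(α₂) for all α₁, α₂ < 0. -/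
/-- The closed-form optimal bid-ask spread `f(α)` is nonincreasing in `α` on
`(−∞, 0)`; and if `π₁₁·μc² = π·μc2` it is constant there. -/
theorem stmt13
    (μc μc2 π π11 μP : ℝ)
    (hμc : 0 < μc) (hμc2 : μc ^ 2 ≤ μc2)
    (hπ : π ∈ Set.Ioc (0:ℝ) 1)
    (hπ11l : 0 ≤ π11) (hπ11u : π11 ≤ π)
    (hμP : 0 < μP)
    (f : ℝ → ℝ)
    (hf : ∀ α, f α = (π * (μc - 2 * α * μc2) + 2 * α * π11 * μc ^ 2) * μP
            / (2 * (π11 * α * μc ^ 2 - π * (α * μc2 - μc)))) :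
    (∀ α₁ α₂ : ℝ, α₁ ≤ α₂ → α₂ < 0 → f α₂ ≤ f α₁) ∧
    (π11 * μc ^ 2 = π * μc2 →
      ∀ α₁ α₂ : ℝ, α₁ < 0 → α₂ < 0 → f α₁ = f α₂) := by
  obtain ⟨hπ0, hπ1⟩ := hπ
  have hk : π11 * μc ^ 2 - π * μc2 ≤ 0 := by nlinarith [sq_nonneg μc]
  have hden : ∀ α : ℝ, α < 0 →
      0 < π11 * α * μc ^ 2 - π * (α * μc2 - μc) := by
    intro α hα
    have h1 : 0 ≤ α * (π11 * μc ^ 2 - π * μc2) := by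
      nlinarith [mul_nonneg (neg_nonneg.2 hα.le) (neg_nonneg.2 hk)]
    nlinarith
  constructor
  · intro α₁ α₂ h12 h2
    have h1 : α₁ < 0 := lt_of_le_of_lt h12 h2
    have d1 := hden α₁ h1
    have d2 := hden α₂ h2
    rw [hf, hf, div_le_div_iff₀ (by linarith) (by linarith)]
    nlinarith [mul_nonneg (mul_nonneg (mul_nonneg hμP.le (mul_pos hπ0 hμc).le)
        (sub_nonneg.2 h12)) (neg_nonneg.2 hk)]
  · intro heq α₁ α₂ h1 h2
    have d1 := hden α₁ h1
    have d2 := hden α₂ h2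
    rw [hf, hf, div_eq_div_iff (by linarith) (by linarith)]
    linear_combination (2 * μP * π * μc * (α₁ - α₂)) * heq
end

section
/- Let α < 0, μc > 0, μc2 ≥ μc², π ∈ (0,1], μP > 0, and for x ∈ [0, π] define g(x) = [π·(μc − 2·α·μc2) + 2·α·x·μc²]·μP / (2·[x·α·μc² − π·(α·μc2 − μc)]). Then g is strictly decreasing on [0, π]: for 0 ≤ x₁ < x₂ ≤ π, g(x₁) > g(x₂). That is, at any fixed time, the optimal bid-ask spread strictly decreases with the probability π(1,1) of simultaneous arrival of buy and sell market orders. -/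
/-- At fixed time, the optimal bid-ask spread `g(x)` strictly decreases with
the joint-arrival probability `x` on `[0, π]`. -/
theorem stmt15
    (α μc μc2 π μP : ℝ)
    (hα : α < 0) (hμc : 0 < μc) (hμc2 : μc ^ 2 ≤ μc2)
    (hπ : π ∈ Set.Ioc (0:ℝ) 1) (hμP : 0 < μP)
    (g : ℝ → ℝ)
    (hg : ∀ x, g x = (π * (μc - 2 * α * μc2) + 2 * α * x * μc ^ 2) * μP
            / (2 * (x * α * μc ^ 2 - π * (α * μc2 - μc)))) :
    ∀ x₁ x₂ : ℝ, 0 ≤ x₁ → x₁ < x₂ → x₂ ≤ π → g x₂ < g x₁ := by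
  intro x₁ x₂ h0 h12 h2π
  obtain ⟨hπ0, hπ1⟩ := hπ
  have h1π : x₁ ≤ π := le_of_lt (lt_of_lt_of_le h12 h2π)
  have hA : α * μc ^ 2 < 0 := mul_neg_of_neg_of_pos hα (pow_pos hμc 2)
  have hkey : 0 ≤ π * (-α) * (μc2 - μc ^ 2) :=
    mul_nonneg (mul_nonneg hπ0.le (neg_nonneg.mpr hα.le)) (sub_nonneg.mpr hμc2)
  have hd2 : 0 < x₂ * α * μc ^ 2 - π * (α * μc2 - μc) := by
    nlinarith [mul_le_mul_of_nonpos_right h2π hA.le, mul_pos hπ0 hμc]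
  have hd1 : 0 < x₁ * α * μc ^ 2 - π * (α * μc2 - μc) := by
    nlinarith [mul_le_mul_of_nonpos_right h1π hA.le, mul_pos hπ0 hμc]
  rw [hg, hg, div_lt_div_iff₀ (by linarith) (by linarith)]
  nlinarith [mul_pos (mul_pos hμP (mul_pos hπ0 hμc)) (mul_pos (mul_pos (neg_pos.mpr hα) (pow_pos hμc 2)) (sub_pos.mpr h12))]
end

section
/- Let μc > 0, μc2 ≥ μc², μp > 0 and α < 0. Define the threshold Ī = μc2·μp/(2·μc) and the optimal ask spread L⁺(I) = α·μc·I/(μc − α·μc2) + (μc − 2·α·μc2)·μp/(2·(μc − α·μc2)). Then: (i) L⁺(Ī) = μp/2, independently of α; (ii) if I < Ī then L⁺(I) > μp/2; (iii) if I > Ī then L⁺(I) < μp/2. That is, for inventory below the threshold Ī the optimal ask quote is placed deeper in the book than the benchmark level S + μp/2, and for inventory above Ī it is placed closer to the fundamental price than S + μp/2. -/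
/-- Threshold behavior of the optimal ask spread: at the inventory threshold
`Ī = μc2·μp/(2·μc)` the optimal ask spread equals `μp/2` (for every `α < 0`);
below the threshold it is strictly larger, above strictly smaller. -/
theorem stmt16
    (μc μc2 μp α : ℝ)
    (hμc : 0 < μc) (hμc2 : μc ^ 2 ≤ μc2) (hμp : 0 < μp) (hα : α < 0)
    (Ibar : ℝ) (hIbar : Ibar = μc2 * μp / (2 * μc))
    (L : ℝ → ℝ)
    (hL : ∀ I, L I = α * μc * I / (μc - α * μc2)
            + (μc - 2 * α * μc2) * μp / (2 * (μc - α * μc2))) :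
    L Ibar = μp / 2 ∧
    (∀ I : ℝ, I < Ibar → μp / 2 < L I) ∧
    (∀ I : ℝ, Ibar < I → L I < μp / 2) := by
  have hc2 : 0 < μc2 := lt_of_lt_of_le (by positivity) hμc2
  have hD : 0 < μc - α * μc2 := by nlinarith
  have key : ∀ I, L I - μp / 2 = α * μc / (μc - α * μc2) * (I - Ibar) := by
    intro I
    rw [hL, hIbar]
    field_simp
    ring
  refine ⟨?_, ?_, ?_⟩
  · have := key Ibar; simp at this; linarith
  · intro I hI
    have h := key I
    have : α * μc / (μc - α * μc2) * (I - Ibar) > 0 := by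
      apply mul_pos_of_neg_of_neg
      · exact div_neg_of_neg_of_pos (by nlinarith) hD
      · linarith
    linarith
  · intro I hI
    have h := key I
    have : α * μc / (μc - α * μc2) * (I - Ibar) < 0 := by
      apply mul_neg_of_neg_of_pos
      · exact div_neg_of_neg_of_pos (by nlinarith) hD
      · linarith
    linarith
end

section
/- Let μc > 0, μc2 ≥ μc², μp > 0 and α < 0. Define the threshold Ī⁻ = −μc2·μp/(2·μc) and the optimal bid displacement B(I) = α·μc·I/(μc − α·μc2) − (μc − 2·α·μc2)·μp/(2·(μc − α·μc2)), so that the optimal bid price is S + B(I). Then: (i) B(Ī⁻) = −μp/2, independently of α; (ii) if I > Ī⁻ then B(I) < −μp/2; (iii) if I < Ī⁻ then B(I) > −μp/2. In particular, for every nonnegative inventory I ≥ 0, the optimal bid quote lies strictly below the benchmark level S − μp/2. -/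
/-- Threshold behavior of the optimal bid displacement: at the inventory
threshold `Ī⁻ = −μc2·μp/(2·μc)` the optimal bid displacement equals `−μp/2`
(for every `α < 0`); for larger inventory it is strictly below `−μp/2`, for
smaller inventory strictly above. In particular, for every nonnegative
inventory the optimal bid quote lies strictly below `S − μp/2`. -/
theorem stmt17
    (μc μc2 μp α : ℝ)
    (hμc : 0 < μc) (hμc2 : μc ^ 2 ≤ μc2) (hμp : 0 < μp) (hα : α < 0)
    (Ibarm : ℝ) (hIbarm : Ibarm = -(μc2 * μp / (2 * μc)))
    (B : ℝ → ℝ)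
    (hB : ∀ I, B I = α * μc * I / (μc - α * μc2)
            - (μc - 2 * α * μc2) * μp / (2 * (μc - α * μc2))) :
    B Ibarm = -(μp / 2) ∧
    (∀ I : ℝ, Ibarm < I → B I < -(μp / 2)) ∧
    (∀ I : ℝ, I < Ibarm → -(μp / 2) < B I) ∧
    (∀ I : ℝ, 0 ≤ I → B I < -(μp / 2)) := by

  have hμc2pos : 0 < μc2 := lt_of_lt_of_le (by positivity) hμc2
  have hD : 0 < μc - α * μc2 := by nlinarith
  have key : ∀ I, B I + μp / 2 = α * (μc * I + μc2 * μp / 2) / (μc - α * μc2) := by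
    intro I
    rw [hB I]
    field_simp
    ring
  have hlt : ∀ I : ℝ, Ibarm < I → B I < -(μp / 2) := by
    intro I hI
    have h1 : 0 < μc * I + μc2 * μp / 2 := by
      rw [hIbarm] at hI
      have := (neg_lt_iff_pos_add).mp hI
      have hq : 0 < μc2 * μp / (2 * μc) + I := by linarith
      have e : μc * (μc2 * μp / (2 * μc)) = μc2 * μp / 2 := by
        field_simp
      nlinarith [mul_pos hμc hq, e]
    have h2 : α * (μc * I + μc2 * μp / 2) / (μc - α * μc2) < 0 :=
      div_neg_of_neg_of_pos (mul_neg_of_neg_of_pos hα h1) hD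
    have := key I
    linarith
  refine ⟨?_, hlt, ?_, ?_⟩
  · have h1 : μc * Ibarm + μc2 * μp / 2 = 0 := by
      rw [hIbarm]; field_simp; ring
    have := key Ibarm
    rw [h1] at this
    simp at this
    linarith
  · intro I hI
    have h1 : μc * I + μc2 * μp / 2 < 0 := by
      rw [hIbarm] at hI
      have e : μc * (μc2 * μp / (2 * μc)) = μc2 * μp / 2 := by
        field_simp
      nlinarith [mul_lt_mul_of_pos_left hI hμc, e]
    have h2 : 0 < α * (μc * I + μc2 * μp / 2) / (μc - α * μc2) :=
      div_pos (mul_pos_of_neg_of_neg hα h1) hD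
    have := key I
    linarith
  · intro I hI
    apply hlt
    rw [hIbarm]
    have : 0 < μc2 * μp / (2 * μc) := by positivity
    linarith
end
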